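/- A ring R is a right V-ring if and only if every finitely generated right R-module is dual automorphism-invariant. -/

import Mathlib

open LinearMap Submodule

/-- A submodule N of M is small (superfluous) in M:
N + K = M implies K = M for every submodule K. -/
def IsSmall {R : Type*} [Ring R] {M : Type*} [AddCommGroup M] [Module R M]
    (N : Submodule R M) : Prop :=
  ∀ K : Submodule R M, N ⊔ K = ⊤ → K = ⊤

/-- M is a dual automorphism-invariant R-module: for any two small submodules
K₁, K₂ of M, every surjective homomorphism η : M/K₁ → M/K₂ whose kernel is
small in M/K₁ lifts to an endomorphism φ of M (i.e. π₂ ∘ φ = η ∘ π₁). -/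
def IsDualAutoInv (R M : Type*) [Ring R] [AddCommGroup M] [Module R M] : Prop :=
  ∀ (K₁ K₂ : Submodule R M), IsSmall K₁ → IsSmall K₂ →
    ∀ η : (M ⧸ K₁) →ₗ[R] (M ⧸ K₂), Function.Surjective η →
      IsSmall (LinearMap.ker η) →
      ∃ φ : M →ₗ[R] M, K₂.mkQ ∘ₗ φ = η ∘ₗ K₁.mkQ

universe u

/-- R is a (right) V-ring: every simple R-module is injective. -/
def IsVRing (R : Type u) [Ring R] : Prop :=
  ∀ (M : Type u) [AddCommGroup M] [Module R M], IsSimpleModule R M → Module.Injective R M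

/-! Both sides amount to the vanishing of Jacobson radicals. Over a V-ring every module `M` has
`Rad M = 0`: for `x ≠ 0` and a maximal left ideal `𝔪 ⊇ ann x`, the map `R ∙ x → R/𝔪` extends to
`M`, and its kernel is a maximal submodule missing `x`. Small submodules lie in the radical, so
they vanish, and a map `η : M/K₁ → M/K₂ = M` lifts to `η ∘ π₁`.

Conversely, if `M × M/K` is dual automorphism-invariant and `K` is small, lifting the swap of the
two factors of `(M × M/K)/(K × 0) ≅ M/K × M/K` produces a section of `M → M/K`, and a small
direct summand is zero. For `M = R/I` the radical is small (a cyclic module has enough maximal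
submodules), so `Rad(R/I) = 0` for every left ideal `I`, and Baer's criterion shows that simple
modules are injective. -/

section Small

variable {R M N : Type*} [Ring R] [AddCommGroup M] [Module R M] [AddCommGroup N] [Module R N]

theorem isSmall_bot : IsSmall (⊥ : Submodule R M) := fun K h => by simpa using h

theorem IsSmall.map {K : Submodule R M} (hK : IsSmall K) (f : M →ₗ[R] N) : IsSmall (K.map f) := by
  intro L hL
  have hcomap : K ⊔ L.comap f = ⊤ := by
    refine eq_top_iff.mpr fun m _ => ?_
    obtain ⟨_, ⟨k, hk, rfl⟩, l, hl, hkl⟩ := mem_sup.mp (hL ▸ mem_top : f m ∈ K.map f ⊔ L)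
    refine mem_sup.mpr ⟨k, hk, m - k, ?_, add_sub_cancel k m⟩
    simpa [← hkl] using hl
  have hrange : range f ≤ L := range_le_iff_comap.mpr (hK _ hcomap)
  rw [← hL, eq_comm, sup_eq_right]
  exact map_le_range.trans hrange

theorem IsSmall.eq_bot_of_isCompl {K L : Submodule R M} (hK : IsSmall K) (h : IsCompl K L) :
    K = ⊥ := by
  simpa [hK L h.sup_eq_top] using h.inf_eq_bot

theorem IsSmall.eq_bot_of_mkQ_comp_eq_id {K : Submodule R M} (hK : IsSmall K)
    {g : M ⧸ K →ₗ[R] M} (hg : K.mkQ ∘ₗ g = LinearMap.id) : K = ⊥ := by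
  have hidem : IsIdempotentElem (g ∘ₗ K.mkQ) := by
    rw [IsIdempotentElem, Module.End.mul_eq_comp, LinearMap.comp_assoc,
      ← LinearMap.comp_assoc K.mkQ, hg, LinearMap.id_comp]
  have hker : ker (g ∘ₗ K.mkQ) = K := by
    rw [ker_comp, ker_eq_bot_of_inverse hg, comap_bot, ker_mkQ]
  exact hK.eq_bot_of_isCompl (hker ▸ hidem.isCompl.symm)

theorem IsSmall.le_jacobson {K : Submodule R M} (hK : IsSmall K) : K ≤ Module.jacobson R M :=
  le_sInf fun m hm => by
    by_contra hKm
    exact hm.1 (hK m (hm.2 _ (right_lt_sup.mpr hKm)))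

theorem isSmall_of_le_jacobson [IsCoatomic (Submodule R M)] {K : Submodule R M}
    (hK : K ≤ Module.jacobson R M) : IsSmall K := by
  intro L hL
  by_contra hLtop
  obtain ⟨m, hm, hLm⟩ := (eq_top_or_exists_le_coatom L).resolve_left hLtop
  exact hm.1 (top_le_iff.mp (hL ▸ sup_le (hK.trans (sInf_le hm)) hLm))

end Small

theorem LinearMap.exists_comp_eq_of_ker_le {R M N P : Type*} [Ring R] [AddCommGroup M]
    [Module R M] [AddCommGroup N] [Module R N] [AddCommGroup P] [Module R P] {f : M →ₗ[R] N}
    (hf : Function.Surjective f) {q : M →ₗ[R] P} (h : ker f ≤ ker q) :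
    ∃ g : N →ₗ[R] P, g ∘ₗ f = q := by
  refine ⟨(ker f).liftQ q h ∘ₗ (f.quotKerEquivOfSurjective hf).symm.toLinearMap,
    LinearMap.ext fun m => ?_⟩
  have : (f.quotKerEquivOfSurjective hf).symm (f m) = (ker f).mkQ m := by
    rw [LinearEquiv.symm_apply_eq]
    rfl
  simp [this]

section DualAutoInv

variable {R M : Type*} [Ring R] [AddCommGroup M] [Module R M]

theorem isDualAutoInv_of_jacobson_eq_bot (h : Module.jacobson R M = ⊥) : IsDualAutoInv R M := by
  intro K₁ K₂ _ hK₂ η _ _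
  have hK₂ : K₂ = ⊥ := eq_bot_iff.mpr (h ▸ hK₂.le_jacobson)
  exact ⟨(K₂.quotEquivOfEqBot hK₂).toLinearMap ∘ₗ η ∘ₗ K₁.mkQ,
    LinearMap.ext fun _ => (K₂.quotEquivOfEqBot hK₂).symm_apply_apply _⟩

theorem IsSmall.eq_bot_of_isDualAutoInv_prod {K : Submodule R M} (hK : IsSmall K)
    (h : IsDualAutoInv R (M × (M ⧸ K))) : K = ⊥ := by
  set ψ := K.mkQ.prodMap (LinearMap.id : (M ⧸ K) →ₗ[R] M ⧸ K)
  have hψ : Function.Surjective ψ := K.mkQ_surjective.prodMap Function.surjective_id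
  have hker : IsSmall (ker ψ) := by
    rw [ker_prodMap, ker_mkQ, ker_id, ← map_inl]
    exact hK.map _
  let e := ψ.quotKerEquivOfSurjective hψ
  let η := (e.trans (LinearEquiv.prodComm R _ _)).trans e.symm
  obtain ⟨φ, hφ⟩ := h _ _ hker hker η.toLinearMap η.surjective
    (by rw [LinearEquiv.ker]; exact isSmall_bot)
  refine hK.eq_bot_of_mkQ_comp_eq_id (g := fst R M (M ⧸ K) ∘ₗ φ ∘ₗ inr R M (M ⧸ K)) ?_
  refine LinearMap.ext fun q => ?_
  have := congr(Prod.fst (e ($hφ (0, q))))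
  simpa [η, e, ψ] using this

end DualAutoInv

theorem IsVRing.jacobson_eq_bot {R : Type u} [Ring R] (hV : IsVRing R) (M : Type*)
    [AddCommGroup M] [Module R M] : Module.jacobson R M = ⊥ := by
  refine eq_bot_iff.mpr fun x hx => (mem_bot R).mpr ?_
  by_contra hx0
  obtain ⟨𝔪, h𝔪, hle⟩ := Ideal.exists_le_maximal (Ideal.torsionOf R M x)
    ((Ideal.torsionOf_eq_top_iff R x).not.mpr hx0)
  have : IsSimpleModule R (R ⧸ 𝔪) := isSimpleModule_iff_isCoatom.mpr h𝔪.out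
  have := hV _ this
  obtain ⟨h, hh⟩ := Module.Injective.extension_property R (R ⧸ 𝔪) _ _ (R ∙ x).subtype
    (R ∙ x).injective_subtype
    (factor hle ∘ₗ (Ideal.quotTorsionOfEquivSpanSingleton R M x).symm.toLinearMap)
  have hhx : h x = Submodule.Quotient.mk 1 := by
    have : (Ideal.quotTorsionOfEquivSpanSingleton R M x).symm ⟨x, mem_span_singleton_self x⟩ =
        Submodule.Quotient.mk 1 := by
      rw [LinearEquiv.symm_apply_eq, Ideal.quotTorsionOfEquivSpanSingleton_apply_mk, one_smul]
    simpa [this] using congr($hh ⟨x, mem_span_singleton_self x⟩)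
  have hhx0 : h x ≠ 0 := by
    rw [hhx, Ne, Submodule.Quotient.mk_eq_zero, ← Ideal.eq_top_iff_one]
    exact h𝔪.ne_top
  have hker : IsCoatom (ker h) :=
    isCoatom_ker_of_surjective (surjective_of_ne_zero fun h0 => hhx0 (by simp [h0]))
  exact hhx0 (sInf_le (α := Submodule R M) hker hx)

theorem isVRing_of_jacobson_quotient_eq_bot {R : Type u} [Ring R]
    (h : ∀ I : Ideal R, Module.jacobson R (R ⧸ I) = ⊥) : IsVRing R := by
  intro S _ _ _
  refine Module.Baer.injective fun J f => ?_
  obtain rfl | hf := eq_or_ne f 0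
  · exact ⟨0, by simp⟩
  obtain ⟨⟨x, hxJ⟩, hfx⟩ := DFunLike.ne_iff.mp hf
  set K₀ : Ideal R := (ker f).map J.subtype
  have hxK₀ : K₀.mkQ x ∉ Module.jacobson R (R ⧸ K₀) := by
    rw [h, mem_bot, mkQ_apply, Submodule.Quotient.mk_eq_zero]
    rintro ⟨y, hy, hyx⟩
    obtain rfl : y = ⟨x, hxJ⟩ := Subtype.ext hyx
    exact hfx hy
  obtain ⟨m, hm, hxm⟩ : ∃ m : Submodule R (R ⧸ K₀), IsCoatom m ∧ K₀.mkQ x ∉ m := by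
    simpa [Module.jacobson, mem_sInf] using hxK₀
  have : IsSimpleModule R ((R ⧸ K₀) ⧸ m) := isSimpleModule_iff_isCoatom.mpr hm
  -- `q` factors through `f` as `g ∘ f`, and Schur's lemma makes `g` an isomorphism.
  set q := m.mkQ ∘ₗ K₀.mkQ ∘ₗ J.subtype
  obtain ⟨g, hg⟩ := exists_comp_eq_of_ker_le (surjective_of_ne_zero hf) (q := q) fun y hy => by
    have hyK₀ : (y : R) ∈ K₀ := mem_map_of_mem hy
    simp only [q, mem_ker, LinearMap.comp_apply, mkQ_apply, subtype_apply,
      (Submodule.Quotient.mk_eq_zero K₀).mpr hyK₀, Submodule.Quotient.mk_zero]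
  have hg0 : g ≠ 0 := by
    rintro rfl
    exact hxm ((Submodule.Quotient.mk_eq_zero m).mp (by simpa [q] using congr($hg ⟨x, hxJ⟩).symm))
  let e := LinearEquiv.ofBijective g (bijective_of_ne_zero hg0)
  refine ⟨e.symm.toLinearMap ∘ₗ m.mkQ ∘ₗ K₀.mkQ, fun y hy => ?_⟩
  rw [LinearMap.comp_apply, LinearEquiv.coe_coe, LinearEquiv.symm_apply_eq]
  exact congr($hg ⟨y, hy⟩).symm

/-- R is a V-ring iff every finitely generated R-module is dual automorphism-invariant. -/
theorem isVRing_iff_finitelyGenerated_dualAutoInv (R : Type u) [Ring R] :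
    IsVRing R ↔
      ∀ (M : Type u) [AddCommGroup M] [Module R M],
        Module.Finite R M → IsDualAutoInv R M := by
  refine ⟨fun hV M _ _ _ => isDualAutoInv_of_jacobson_eq_bot (hV.jacobson_eq_bot M), fun h => ?_⟩
  refine isVRing_of_jacobson_quotient_eq_bot fun I => ?_
  exact (isSmall_of_le_jacobson le_rfl).eq_bot_of_isDualAutoInv_prod (h _ inferInstance)
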